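/- A foliage tree F is a locally strict foliage ω,ω-tree with strict branches if and only if F is isomorphic to the standard foliage tree S of ω^ω. -/

import Mathlib

open Set

universe u v

/-- A family `γ` π-refines `δ`: every nonempty member of `δ` contains a
nonempty member of `γ`. -/
def PiRefines {α : Type*} (γ δ : Set (Set α)) : Prop :=
  ∀ D ∈ δ, D.Nonempty → ∃ G ∈ γ, G.Nonempty ∧ G ⊆ D

/-- The finite intersection property. -/
def HasFIP {α : Type*} (γ : Set (Set α)) : Prop :=
  ∀ δ : Set (Set α), δ ⊆ γ → δ.Finite → δ.Nonempty → (⋂₀ δ).Nonempty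

/-- `cofin A` is the family of complements in `A` of finite subsets of `A`. -/
def cofin (A : Set ℕ) : Set (Set ℕ) :=
  {B | ∃ C : Set ℕ, C.Finite ∧ C ⊆ A ∧ B = A \ C}

/-- A foliage tree on `X`: a set-theoretic tree (strict partial order with
well-ordered sets of strict predecessors) with a leaf (a subset of `X`)
attached to each node. -/
structure FoliageTree (X : Type u) where
  Node : Type
  lt : Node → Node → Prop
  lt_irrefl : ∀ a, ¬ lt a a
  lt_trans : ∀ {a b c}, lt a b → lt b c → lt a c
  wellOrdered : ∀ a : Node, IsWellOrder {b : Node // lt b a} fun x y => lt x.1 y.1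
  leaf : Node → Set X

/-- Strict proper-extension order on finite sequences of naturals. -/
def seqLT (a b : List ℕ) : Prop := a <+: b ∧ a ≠ b

namespace FoliageTree

variable {X : Type u}

/-- The sons (immediate successors) of a node. -/
def Sons (F : FoliageTree X) (x : F.Node) : Set F.Node :=
  {s | F.lt x s ∧ ¬ ∃ t, F.lt x t ∧ F.lt t s}

/-- A node is maximal if it has no strict successor. -/
def IsMaxNode (F : FoliageTree X) (x : F.Node) : Prop := ¬ ∃ s, F.lt x s

/-- A chain of nodes. -/
def IsChainN (F : FoliageTree X) (C : Set F.Node) : Prop :=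
  ∀ x ∈ C, ∀ y ∈ C, F.lt x y ∨ x = y ∨ F.lt y x

/-- A branch is a maximal chain. -/
def IsBranch (F : FoliageTree X) (B : Set F.Node) : Prop :=
  F.IsChainN B ∧ ∀ C, F.IsChainN C → B ⊆ C → B = C

/-- The height of a node: the order type of its set of strict predecessors. -/
noncomputable def height (F : FoliageTree X) (v : F.Node) : Ordinal :=
  @Ordinal.type {b : F.Node // F.lt b v} (fun x y => F.lt x.1 y.1) (F.wellOrdered v)

/-- `shoot F v`: unions of leaves over cofinite sets of sons of `v`. -/
def shoot (F : FoliageTree X) (v : F.Node) : Set (Set X) :=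
  {S | ∃ C : Set F.Node, C ⊆ F.Sons v ∧ (F.Sons v \ C).Finite ∧ S = ⋃ s ∈ C, F.leaf s}

/-- `scope F p`: the nodes whose leaf contains `p`. -/
def scope (F : FoliageTree X) (p : X) : Set F.Node := {x | p ∈ F.leaf x}

/-- The union of all leaves. -/
def flesh (F : FoliageTree X) : Set X := ⋃ x, F.leaf x

/-- `F` is a foliage `ω,ω`-tree: its skeleton is order-isomorphic to
`(ω^{<ω}, ⊂)`. -/
def IsOmegaOmegaTree (F : FoliageTree X) : Prop := Nonempty (F.lt ≃r seqLT)

/-- `F` is locally strict: the leaf of every non-maximal node is the disjoint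
union of the leaves of its sons. -/
def LocallyStrict (F : FoliageTree X) : Prop :=
  ∀ x, ¬ F.IsMaxNode x →
    F.leaf x = (⋃ s ∈ F.Sons x, F.leaf s) ∧
      ∀ s ∈ F.Sons x, ∀ t ∈ F.Sons x, s ≠ t → Disjoint (F.leaf s) (F.leaf t)

/-- `F` has strict branches: it has nodes, and along every branch the
intersection of the leaves is a singleton. -/
def StrictBranches (F : FoliageTree X) : Prop :=
  Nonempty F.Node ∧ ∀ B, F.IsBranch B → ∃ p, (⋂ x ∈ B, F.leaf x) = {p}

/-- `r` is the root: the least node. -/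
def IsRoot (F : FoliageTree X) (r : F.Node) : Prop := ∀ x, r = x ∨ F.lt r x

/-- All leaves are open. -/
def OpenIn [TopologicalSpace X] (F : FoliageTree X) : Prop := ∀ x, IsOpen (F.leaf x)

/-- `F` is a Baire foliage tree on `X`. -/
def IsBaireFoliageTree [TopologicalSpace X] (F : FoliageTree X) : Prop :=
  F.OpenIn ∧ F.LocallyStrict ∧ F.IsOmegaOmegaTree ∧ F.StrictBranches ∧
    ∃ r, F.IsRoot r ∧ F.leaf r = Set.univ

/-- `F` grows into `X`. -/
def GrowsInto [TopologicalSpace X] (F : FoliageTree X) : Prop :=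
  ∀ p : X, ∀ U ∈ nhds p, ∃ z ∈ F.scope p, PiRefines (F.shoot z) {U}

/-- `F` is a π-tree on `X`. -/
def IsPiTree [TopologicalSpace X] (F : FoliageTree X) : Prop :=
  F.IsBaireFoliageTree ∧ F.GrowsInto

/-- `rise F p U`: the set of (finite) heights of nodes `v` whose leaf contains
`p` and whose shoot π-refines `{U}`. -/
noncomputable def rise (F : FoliageTree X) (p : X) (U : Set X) : Set ℕ :=
  {n | ∃ v ∈ F.scope p, PiRefines (F.shoot v) {U} ∧ F.height v = (n : Ordinal)}

/-- `Rise F`: all sets `rise F p U` for `p ∈ X` and `U` a neighbourhood of `p`. -/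
def Rise [TopologicalSpace X] (F : FoliageTree X) : Set (Set ℕ) :=
  {R | ∃ p U, U ∈ nhds p ∧ R = F.rise p U}

end FoliageTree

/-- The cylinder of all infinite extensions of a finite sequence. -/
def cyl (x : List ℕ) : Set (ℕ → ℕ) := {p | ∀ j : Fin x.length, p j = x.get j}

lemma seqLT_trans' {a b c : List ℕ} (h1 : seqLT a b) (h2 : seqLT b c) : seqLT a c := by
  refine ⟨h1.1.trans h2.1, ?_⟩
  rintro rfl
  exact h1.2 (h1.1.eq_of_length (le_antisymm h1.1.length_le h2.1.length_le))

lemma seqLT_length_lt {a b : List ℕ} (h : seqLT a b) : a.length < b.length :=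
  lt_of_le_of_ne h.1.length_le fun he => h.2 (h.1.eq_of_length he)

lemma seqLT_isWellOrder (a : List ℕ) :
    IsWellOrder {b : List ℕ // seqLT b a} (fun x y => seqLT x.1 y.1) where
  trichotomous := by
    rintro ⟨x, hx⟩ ⟨y, hy⟩ h1 h2
    rcases List.prefix_or_prefix_of_prefix hx.1 hy.1 with h | h
    · by_cases he : x = y
      · exact Subtype.ext he
      · exact absurd ⟨h, he⟩ h1
    · by_cases he : x = y
      · exact Subtype.ext he
      · exact absurd ⟨h, fun hh => he hh.symm⟩ h2
  wf := by
    have h : WellFounded (InvImage Nat.lt (fun x : {b : List ℕ // seqLT b a} => x.1.length)) :=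
      InvImage.wf _ Nat.lt_wfRel.wf
    exact Subrelation.wf (fun {x y} hxy => seqLT_length_lt hxy) h

/-- The standard foliage tree of `ω^ω`: skeleton `(ω^{<ω}, ⊂)`, leaves the
cylinders. -/
def stdTree : FoliageTree (ℕ → ℕ) where
  Node := List ℕ
  lt := seqLT
  lt_irrefl := fun _ h => h.2 rfl
  lt_trans := fun h1 h2 => seqLT_trans' h1 h2
  wellOrdered := seqLT_isWellOrder
  leaf := cyl

/-- Isomorphism of foliage trees: an order isomorphism `φ` of skeletons
together with a bijection `ψ` of fleshes carrying each leaf `F_x` onto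
`G_{φ x}`. -/
def FoliageTree.Isomorphic {X : Type u} {Y : Type v}
    (F : FoliageTree X) (G : FoliageTree Y) : Prop :=
  ∃ (φ : F.lt ≃r G.lt) (ψ : ↥F.flesh ≃ ↥G.flesh),
    ∀ (x : F.Node) (p : ↥F.flesh), (p : X) ∈ F.leaf x ↔ (ψ p : Y) ∈ G.leaf (φ x)


/-!
Read through an isomorphism `φ` of skeletons, the leaves of `F` form a family `L s`,
`s ∈ ω^{<ω}`, in which every `L s` is the disjoint union of the `L (s ++ [n])` and, for every
`f ∈ ω^ω`, the sets `L (initSeg f k)` shrink to a single point `θ f`. Disjointness makes the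
node of a given length containing a point unique, so `θ f ∈ L s` iff `s` is an initial segment
of `f`: hence `θ` is injective and carries the cylinders onto the leaves, while descending
through the partitions gives every point of the flesh an address, so `θ` is onto. Conversely,
the three properties transfer along isomorphisms and hold for the standard tree.
-/

namespace FoliageTree

section Transport

variable {X : Type u} {Y : Type v} {F : FoliageTree X} {G : FoliageTree Y}

theorem mem_flesh_of_mem_leaf {x : F.Node} {q : X} (h : q ∈ F.leaf x) : q ∈ F.flesh :=
  Set.mem_iUnion.2 ⟨x, h⟩

theorem sons_map (e : F.lt ≃r G.lt) (x : F.Node) : G.Sons (e x) = e '' F.Sons x := by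
  ext t
  obtain ⟨s, rfl⟩ := e.surjective t
  simp only [Sons, Set.mem_ofPred_eq, e.injective.mem_set_image, e.surjective.exists,
    e.map_rel_iff]

theorem IsChainN.image (e : F.lt ≃r G.lt) {C : Set F.Node} (h : F.IsChainN C) :
    G.IsChainN (e '' C) := by
  rintro _ ⟨x, hx, rfl⟩ _ ⟨y, hy, rfl⟩
  simpa only [e.map_rel_iff, e.injective.eq_iff] using h x hx y hy

theorem IsBranch.image (e : F.lt ≃r G.lt) {B : Set F.Node} (h : F.IsBranch B) :
    G.IsBranch (e '' B) := by
  refine ⟨h.1.image e, fun C hC hBC => ?_⟩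
  have hB : B = e.symm '' C :=
    h.2 _ (hC.image e.symm) fun x hx => ⟨e x, hBC ⟨x, hx, rfl⟩, e.symm_apply_apply x⟩
  simp [hB, Set.image_image]

theorem IsBranch.nonempty [Nonempty F.Node] {B : Set F.Node} (h : F.IsBranch B) :
    B.Nonempty := by
  obtain ⟨x⟩ := ‹Nonempty F.Node›
  rw [Set.nonempty_iff_ne_empty]
  rintro rfl
  have hchain : F.IsChainN {x} := by
    rintro a rfl b rfl
    exact Or.inr (Or.inl rfl)
  exact Set.singleton_ne_empty x (h.2 {x} hchain (Set.empty_subset _)).symm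

theorem Isomorphic.locallyStrict (hFG : F.Isomorphic G) (hG : G.LocallyStrict) :
    F.LocallyStrict := by
  obtain ⟨φ, ψ, hψ⟩ := hFG
  intro x hx
  have hφx : ¬ G.IsMaxNode (φ x) := fun hmax =>
    hx fun ⟨s, hs⟩ => hmax ⟨φ s, φ.map_rel_iff.2 hs⟩
  obtain ⟨hcover, hdisj⟩ := hG _ hφx
  rw [sons_map φ] at hcover hdisj
  refine ⟨Set.Subset.antisymm (fun q hq => ?_) (Set.iUnion₂_subset fun s hs q hq => ?_), ?_⟩
  · let q' : F.flesh := ⟨q, mem_flesh_of_mem_leaf hq⟩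
    have hq' := (hψ x q').1 hq
    rw [hcover, Set.biUnion_image] at hq'
    obtain ⟨s, hs, hqs⟩ := Set.mem_iUnion₂.1 hq'
    exact Set.mem_iUnion₂.2 ⟨s, hs, (hψ s q').2 hqs⟩
  · let q' : F.flesh := ⟨q, mem_flesh_of_mem_leaf hq⟩
    refine (hψ x q').2 ?_
    rw [hcover, Set.biUnion_image]
    exact Set.mem_iUnion₂.2 ⟨s, hs, (hψ s q').1 hq⟩
  · intro s hs t ht hst
    refine Set.disjoint_left.2 fun q hqs hqt => ?_
    let q' : F.flesh := ⟨q, mem_flesh_of_mem_leaf hqs⟩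
    exact Set.disjoint_left.1 (hdisj _ ⟨s, hs, rfl⟩ _ ⟨t, ht, rfl⟩ (φ.injective.ne hst))
      ((hψ s q').1 hqs) ((hψ t q').1 hqt)

theorem Isomorphic.strictBranches (hFG : F.Isomorphic G) (hG : G.StrictBranches) :
    F.StrictBranches := by
  obtain ⟨φ, ψ, hψ⟩ := hFG
  have : Nonempty F.Node := ⟨φ.symm hG.1.some⟩
  refine ⟨this, fun B hB => ?_⟩
  obtain ⟨p, hp⟩ := hG.2 _ (hB.image φ)
  rw [Set.biInter_image] at hp
  have hpB : ∀ x ∈ B, p ∈ G.leaf (φ x) := Set.mem_iInter₂.1 (hp ▸ rfl : p ∈ ⋂ x ∈ B, _)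
  obtain ⟨x₀, hx₀⟩ := hB.nonempty
  let p' : G.flesh := ⟨p, mem_flesh_of_mem_leaf (hpB x₀ hx₀)⟩
  refine ⟨ψ.symm p', Set.eq_singleton_iff_unique_mem.2 ⟨Set.mem_iInter₂.2 fun x hx => ?_, ?_⟩⟩
  · exact (hψ x _).2 (by simpa only [ψ.apply_symm_apply] using hpB x hx)
  · intro q hq
    have hqB := Set.mem_iInter₂.1 hq
    let q' : F.flesh := ⟨q, mem_flesh_of_mem_leaf (hqB x₀ hx₀)⟩
    have hψq : (ψ q' : Y) ∈ ⋂ x ∈ B, G.leaf (φ x) :=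
      Set.mem_iInter₂.2 fun x hx => (hψ x q').1 (hqB x hx)
    rw [hp] at hψq
    have : ψ q' = p' := Subtype.ext hψq
    exact congrArg Subtype.val (ψ.eq_symm_apply.2 this)

end Transport

end FoliageTree

def initSeg (f : ℕ → ℕ) (k : ℕ) : List ℕ := (List.range k).map f

@[simp] theorem length_initSeg (f : ℕ → ℕ) (k : ℕ) : (initSeg f k).length = k := by
  simp [initSeg]

@[simp] theorem getElem_initSeg (f : ℕ → ℕ) {k i : ℕ} (h : i < (initSeg f k).length) :
    (initSeg f k)[i] = f i := by
  simp [initSeg]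

theorem initSeg_succ (f : ℕ → ℕ) (k : ℕ) : initSeg f (k + 1) = initSeg f k ++ [f k] := by
  simp [initSeg, List.range_succ]

theorem initSeg_prefix (f : ℕ → ℕ) {k m : ℕ} (h : k ≤ m) : initSeg f k <+: initSeg f m := by
  induction m, h using Nat.le_induction with
  | base => exact List.prefix_refl _
  | succ m _ ih => exact ih.trans (initSeg_succ f m ▸ List.prefix_append _ _)

theorem mem_cyl_iff_initSeg {f : ℕ → ℕ} {l : List ℕ} : f ∈ cyl l ↔ initSeg f l.length = l := by
  simp only [cyl, Set.mem_ofPred_eq, List.ext_getElem_iff, initSeg, List.length_map,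
    List.length_range, List.getElem_map, List.getElem_range, Fin.forall_iff, List.get_eq_getElem,
    true_and]
  exact ⟨fun h i hi _ => h i hi, fun h i hi => h i hi hi⟩

theorem mem_cyl_initSeg (f : ℕ → ℕ) (k : ℕ) : f ∈ cyl (initSeg f k) := by
  rw [mem_cyl_iff_initSeg, length_initSeg]

theorem mem_cyl_append_singleton {f : ℕ → ℕ} {l : List ℕ} {n : ℕ} :
    f ∈ cyl (l ++ [n]) ↔ f ∈ cyl l ∧ f l.length = n := by
  rw [mem_cyl_iff_initSeg, mem_cyl_iff_initSeg, List.length_append, List.length_singleton,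
    initSeg_succ]
  constructor
  · intro h
    obtain ⟨h₁, h₂⟩ := List.append_inj' h rfl
    exact ⟨h₁, List.singleton_inj.1 h₂⟩
  · rintro ⟨h, rfl⟩
    rw [h]

theorem iInter_cyl_initSeg (f : ℕ → ℕ) : ⋂ k, cyl (initSeg f k) = {f} := by
  refine Set.eq_singleton_iff_unique_mem.2 ⟨Set.mem_iInter.2 (mem_cyl_initSeg f), fun g hg => ?_⟩
  funext j
  have h := mem_cyl_iff_initSeg.1 (Set.mem_iInter.1 hg (j + 1))
  rw [length_initSeg] at h
  simpa using List.getElem_of_eq h (by simp : j < (initSeg g (j + 1)).length)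

theorem seqLT_append_singleton (l : List ℕ) (n : ℕ) : seqLT l (l ++ [n]) :=
  ⟨List.prefix_append _ _, by simp⟩

theorem stdTree_sons (l : List ℕ) :
    stdTree.Sons l = Set.range (fun n => l ++ [n] : ℕ → List ℕ) := by
  ext s
  constructor
  · rintro ⟨⟨⟨r, rfl⟩, hne⟩, hmin⟩
    obtain _ | ⟨n, r⟩ := r
    · simp at hne
    obtain rfl | hr := eq_or_ne r []
    · exact ⟨n, rfl⟩
    refine absurd ⟨l ++ [n], seqLT_append_singleton l n, ?_⟩ hmin
    exact ⟨by simp, by simpa using hr.symm⟩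
  · rintro ⟨n, rfl⟩
    refine ⟨seqLT_append_singleton l n, fun ⟨(t : List ℕ), hlt, htl⟩ => ?_⟩
    have h₁ : l.length < t.length := seqLT_length_lt hlt
    have h₂ : t.length < (l ++ [n]).length := seqLT_length_lt htl
    simp only [List.length_append, List.length_singleton] at h₂
    omega

theorem stdTree_locallyStrict : stdTree.LocallyStrict := by
  intro (l : List ℕ) _
  refine ⟨Set.Subset.antisymm (fun f hf => ?_) (Set.iUnion₂_subset fun s hs => ?_), ?_⟩
  · refine Set.mem_iUnion₂.2 ⟨l ++ [f l.length], ?_, mem_cyl_append_singleton.2 ⟨hf, rfl⟩⟩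
    rw [stdTree_sons]
    exact ⟨_, rfl⟩
  · rw [stdTree_sons] at hs
    obtain ⟨n, rfl⟩ := hs
    exact fun f hf => (mem_cyl_append_singleton.1 hf).1
  · rw [stdTree_sons]
    rintro _ ⟨m, rfl⟩ _ ⟨n, rfl⟩ hmn
    refine Set.disjoint_left.2 fun f hm hn => hmn ?_
    rw [(mem_cyl_append_singleton.1 hm).2.symm.trans (mem_cyl_append_singleton.1 hn).2]

theorem seqLT_initSeg (f : ℕ → ℕ) {k m : ℕ} (h : k < m) : seqLT (initSeg f k) (initSeg f m) :=
  ⟨initSeg_prefix f h.le, fun he => h.ne (by simpa using congrArg List.length he)⟩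

theorem mem_stdTree_flesh (f : ℕ → ℕ) : f ∈ stdTree.flesh :=
  Set.mem_iUnion.2 ⟨([] : List ℕ), mem_cyl_initSeg f 0⟩

theorem prefix_or_prefix_of_isChainN {C : Set (List ℕ)} (hC : stdTree.IsChainN C) {a b : List ℕ}
    (ha : a ∈ C) (hb : b ∈ C) : a <+: b ∨ b <+: a := by
  rcases hC a ha b hb with h | rfl | h
  · exact Or.inl h.1
  · exact Or.inl (List.prefix_refl a)
  · exact Or.inr h.1

theorem exists_subset_range_initSeg {C : Set (List ℕ)} (hC : stdTree.IsChainN C) :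
    ∃ f, C ⊆ Set.range (initSeg f) := by
  classical
  let f : ℕ → ℕ := fun j =>
    if h : ∃ l ∈ C, j < l.length then h.choose[j]'h.choose_spec.2 else 0
  refine ⟨f, fun l hl => ⟨l.length, List.ext_getElem (length_initSeg _ _) fun j _ hj => ?_⟩⟩
  have h : ∃ l ∈ C, j < l.length := ⟨l, hl, hj⟩
  simp only [getElem_initSeg, f, dif_pos h]
  rcases prefix_or_prefix_of_isChainN hC h.choose_spec.1 hl with hp | hp
  · exact hp.getElem _
  · exact (hp.getElem _).symm

theorem isChainN_range_initSeg (f : ℕ → ℕ) : stdTree.IsChainN (Set.range (initSeg f)) := by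
  rintro _ ⟨k, rfl⟩ _ ⟨m, rfl⟩
  rcases lt_trichotomy k m with h | rfl | h
  · exact Or.inl (seqLT_initSeg f h)
  · exact Or.inr (Or.inl rfl)
  · exact Or.inr (Or.inr (seqLT_initSeg f h))

theorem isBranch_range_initSeg (f : ℕ → ℕ) : stdTree.IsBranch (Set.range (initSeg f)) := by
  refine ⟨isChainN_range_initSeg f, fun C hC hfC => hfC.antisymm fun l hl => ?_⟩
  rcases prefix_or_prefix_of_isChainN hC (hfC ⟨l.length, rfl⟩) hl with h | h
  · exact ⟨l.length, h.eq_of_length (length_initSeg _ _)⟩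
  · exact ⟨l.length, (h.eq_of_length (length_initSeg _ _).symm).symm⟩

theorem FoliageTree.IsBranch.exists_eq_range_initSeg {B : Set (List ℕ)}
    (hB : stdTree.IsBranch B) : ∃ f, B = Set.range (initSeg f) := by
  obtain ⟨f, hf⟩ := exists_subset_range_initSeg hB.1
  exact ⟨f, hB.2 _ (isChainN_range_initSeg f) hf⟩

theorem stdTree_strictBranches : stdTree.StrictBranches := by
  refine ⟨⟨([] : List ℕ)⟩, fun B hB => ?_⟩
  obtain ⟨f, rfl⟩ := hB.exists_eq_range_initSeg
  exact ⟨f, Set.biInter_range.trans (iInter_cyl_initSeg f)⟩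

theorem exists_forall_initSeg {P : List ℕ → Prop} (h₀ : P [])
    (hstep : ∀ l, P l → ∃ n, P (l ++ [n])) : ∃ f, ∀ k, P (initSeg f k) := by
  choose! g hg using hstep
  let ℓ : ℕ → List ℕ := fun k => Nat.rec [] (fun _ l => l ++ [g l]) k
  have hℓ : ∀ k, initSeg (fun k => g (ℓ k)) k = ℓ k := by
    intro k
    induction k with
    | zero => rfl
    | succ k ih => rw [initSeg_succ, ih]
  refine ⟨fun k => g (ℓ k), fun k => ?_⟩
  rw [hℓ]
  induction k with
  | zero => exact h₀
  | succ k ih => exact hg _ ih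

structure IsLusinPartition {X : Type*} (L : List ℕ → Set X) : Prop where
  iUnion_eq : ∀ l, ⋃ n, L (l ++ [n]) = L l
  disjoint : ∀ l {m n : ℕ}, m ≠ n → Disjoint (L (l ++ [m])) (L (l ++ [n]))

namespace IsLusinPartition

variable {X : Type*} {L : List ℕ → Set X}

theorem subset_of_prefix (hL : IsLusinPartition L) {a b : List ℕ} (h : a <+: b) : L b ⊆ L a := by
  obtain ⟨r, rfl⟩ := h
  induction r generalizing a with
  | nil => simp
  | cons n r ih =>
    calc L (a ++ n :: r) = L (a ++ [n] ++ r) := by simp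
      _ ⊆ L (a ++ [n]) := ih
      _ ⊆ L a := hL.iUnion_eq a ▸ Set.subset_iUnion (fun n => L (a ++ [n])) n

theorem eq_of_mem (hL : IsLusinPartition L) {p : X} {a b : List ℕ} (hlen : a.length = b.length)
    (ha : p ∈ L a) (hb : p ∈ L b) : a = b := by
  induction a using List.reverseRecOn generalizing b with
  | nil => exact (List.length_eq_zero_iff.1 hlen.symm).symm
  | append_singleton a m ih =>
    obtain rfl | ⟨b, n, rfl⟩ := List.eq_nil_or_concat' b
    · simp at hlen
    simp only [List.length_append, List.length_singleton, add_left_inj] at hlen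
    obtain rfl := ih hlen (hL.subset_of_prefix (List.prefix_append _ _) ha)
      (hL.subset_of_prefix (List.prefix_append _ _) hb)
    obtain rfl : m = n := by_contra fun hmn => Set.disjoint_left.1 (hL.disjoint a hmn) ha hb
    rfl

theorem exists_equiv (hL : IsLusinPartition L)
    (hpt : ∀ f, ∃ p, ⋂ k, L (initSeg f k) = {p}) :
    ∃ e : (ℕ → ℕ) ≃ L [], ∀ f l, (e f : X) ∈ L l ↔ f ∈ cyl l := by
  choose θ hθ using hpt
  have hθmem : ∀ f k, θ f ∈ L (initSeg f k) := fun f =>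
    Set.mem_iInter.1 ((hθ f).symm ▸ rfl : θ f ∈ ⋂ k, L (initSeg f k))
  have hθL : ∀ f l, θ f ∈ L l ↔ f ∈ cyl l := fun f l => by
    rw [mem_cyl_iff_initSeg]
    exact ⟨fun h => hL.eq_of_mem (length_initSeg f _) (hθmem f _) h, fun h => h ▸ hθmem f _⟩
  have hinj : θ.Injective := fun f g hfg => by
    have hf : f ∈ ⋂ k, cyl (initSeg g k) :=
      Set.mem_iInter.2 fun k => (hθL f _).1 (hfg ▸ hθmem g k)
    rwa [iInter_cyl_initSeg] at hf
  have hsurj : ∀ p ∈ L [], ∃ f, θ f = p := fun p hp => by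
    obtain ⟨f, hf⟩ := exists_forall_initSeg (P := (p ∈ L ·)) hp fun l hl => by
      rw [← hL.iUnion_eq l] at hl
      exact Set.mem_iUnion.1 hl
    have hpf : p ∈ ⋂ k, L (initSeg f k) := Set.mem_iInter.2 hf
    rw [hθ f] at hpf
    exact ⟨f, hpf.symm⟩
  refine ⟨Equiv.ofBijective (fun f => ⟨θ f, hθmem f 0⟩)
    ⟨fun f g h => hinj (congrArg Subtype.val h), fun ⟨p, hp⟩ => ?_⟩, hθL⟩
  obtain ⟨f, rfl⟩ := hsurj p hp
  exact ⟨f, rfl⟩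

end IsLusinPartition

namespace FoliageTree

variable {X : Type u} {F : FoliageTree X}

theorem LocallyStrict.isLusinPartition (hF : F.LocallyStrict) (φ : F.lt ≃r stdTree.lt) :
    IsLusinPartition fun l => F.leaf (φ.symm l) := by
  have hsons (l : List ℕ) : F.Sons (φ.symm l) = Set.range fun n => φ.symm (l ++ [n]) := by
    rw [sons_map φ.symm l, stdTree_sons]
    exact (Set.range_comp φ.symm fun n => l ++ [n]).symm
  have hnonmax (l : List ℕ) : ¬ F.IsMaxNode (φ.symm l) := fun hmax =>
    hmax ⟨φ.symm (l ++ [0]), φ.symm.map_rel_iff.2 (seqLT_append_singleton l 0)⟩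
  refine ⟨fun l => ?_, fun l m n hmn => ?_⟩
  · rw [(hF _ (hnonmax l)).1, hsons, Set.biUnion_range]
    rfl
  · have hdisj := (hF _ (hnonmax l)).2
    rw [hsons] at hdisj
    refine hdisj _ ⟨m, rfl⟩ _ ⟨n, rfl⟩ (φ.symm.injective.ne fun h => hmn ?_)
    exact List.singleton_inj.1 (List.append_cancel_left h)

theorem StrictBranches.exists_iInter_leaf_initSeg (hF : F.StrictBranches)
    (φ : F.lt ≃r stdTree.lt) (f : ℕ → ℕ) : ∃ p, ⋂ k, F.leaf (φ.symm (initSeg f k)) = {p} := by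
  obtain ⟨p, hp⟩ := hF.2 _ ((isBranch_range_initSeg f).image φ.symm)
  rw [Set.biInter_image] at hp
  exact ⟨p, (Set.biInter_range (f := initSeg f) (g := fun l => F.leaf (φ.symm l))).symm.trans
    hp⟩

theorem isomorphic_stdTree (hLS : F.LocallyStrict) (hΩ : F.IsOmegaOmegaTree)
    (hSB : F.StrictBranches) : F.Isomorphic stdTree := by
  obtain ⟨φ⟩ : Nonempty (F.lt ≃r stdTree.lt) := hΩ
  have hL := hLS.isLusinPartition φ
  obtain ⟨e, he⟩ := hL.exists_equiv (hSB.exists_iInter_leaf_initSeg φ)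
  have hflesh : F.flesh = F.leaf (φ.symm []) := by
    refine Set.Subset.antisymm (Set.iUnion_subset fun x => ?_) (Set.subset_iUnion _ _)
    simpa using hL.subset_of_prefix (List.nil_prefix (l := φ x))
  refine ⟨φ, (Equiv.setCongr hflesh).trans
    (e.symm.trans (Equiv.subtypeUnivEquiv mem_stdTree_flesh).symm), fun x p => ?_⟩
  have hp := he (e.symm ⟨p, hflesh ▸ p.2⟩) (φ x)
  simp only [Equiv.apply_symm_apply, RelIso.symm_apply_apply] at hp
  show (p : X) ∈ F.leaf x ↔ e.symm ⟨p, hflesh ▸ p.2⟩ ∈ cyl (φ x)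
  exact hp

end FoliageTree

/-- Lemma `lem.F.vs.S.by.isomorph` (a) of the paper: a foliage tree is a
locally strict foliage ω,ω-tree with strict branches iff it is isomorphic to
the standard foliage tree of `ω^ω`. -/
theorem locallyStrict_omegaOmega_strictBranches_iff_isomorphic_stdTree
    {X : Type u} (F : FoliageTree X) :
    (F.LocallyStrict ∧ F.IsOmegaOmegaTree ∧ F.StrictBranches) ↔ F.Isomorphic stdTree :=
  ⟨fun ⟨hLS, hΩ, hSB⟩ => F.isomorphic_stdTree hLS hΩ hSB, fun h =>
    ⟨h.locallyStrict stdTree_locallyStrict, h.elim fun φ _ => ⟨φ⟩,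
      h.strictBranches stdTree_strictBranches⟩⟩
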